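/- Let k ≥ 1 and define d(p,q) := ρ(p^{−1}·q) for p, q ∈ ℂ^k × ℝ. Then d is a metric on ℂ^k × ℝ: d(p,q) ≥ 0 with d(p,q) = 0 if and only if p = q, d(p,q) = d(q,p), and d(p,q) ≤ d(p,w) + d(w,q) for all p, q, w. Moreover d is left-invariant, d(g·p, g·q) = d(p,q) for all g, and homogeneous with respect to the dilations: d(δ_r p, δ_r q) = r·d(p,q) for all r > 0. -/

import Mathlib

/-!
With `A(z,t) = |z|² + i t ∈ ℂ` one has `ρ(v)² = |A(v)|` and `A(p·q) = A(p) + A(q) + 2⟨z,z'⟩`.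
Cauchy–Schwarz gives `|⟨z,z'⟩| ≤ |z||z'| ≤ ρ(p)ρ(q)`, hence `ρ(p·q)² ≤ (ρ(p) + ρ(q))²`, and the
triangle inequality for `d` is this subadditivity applied to `p⁻¹q = (p⁻¹w)(w⁻¹q)`. The other
properties are group identities together with `ρ(v⁻¹) = ρ(v)` and `ρ(δ_r v) = r ρ(v)`.
-/

open MeasureTheory
open scoped ENNReal

noncomputable section

/-- The underlying space of the Heisenberg group ℍ_k : ℂ^k × ℝ. -/
abbrev Hk (k : ℕ) := (Fin k → ℂ) × ℝ

/-- The Korányi gauge ρ(z,t) = (|z|⁴ + t²)^{1/4}, where |z|² = Σⱼ |zⱼ|². -/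
def rhoK (k : ℕ) (v : Hk k) : ℝ :=
  ((∑ j, ‖v.1 j‖ ^ 2) ^ 2 + v.2 ^ 2) ^ ((1 : ℝ) / 4)

/-- The Heisenberg dilations δ_r(z,t) = (r z, r² t). -/
def dilK (k : ℕ) (r : ℝ) (v : Hk k) : Hk k := (r • v.1, r ^ 2 * v.2)

/-- The Korányi unit sphere S_ρ = {v : ρ(v) = 1}. -/
def SK (k : ℕ) : Set (Hk k) := {v | rhoK k v = 1}

/-- The Heisenberg group law (z,t)·(z',t') = (z+z', t+t'+2 Im⟨z,z'⟩). -/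
def hmul (k : ℕ) (p q : Hk k) : Hk k :=
  (p.1 + q.1, p.2 + q.2 + 2 * (∑ j, p.1 j * (starRingEnd ℂ) (q.1 j)).im)

/-- The Heisenberg group inverse (z,t)⁻¹ = (−z,−t). -/
def hinv (k : ℕ) (p : Hk k) : Hk k := (-p.1, -p.2)

/-- The left-invariant Korányi distance d(p,q) = ρ(p⁻¹·q). -/
def dK (k : ℕ) (p q : Hk k) : ℝ := rhoK k (hmul k (hinv k p) q)

open ComplexConjugate

section Heisenberg

variable {k : ℕ}

theorem norm_sum_mul_conj_le {ι : Type*} [Fintype ι] (z w : ι → ℂ) :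
    ‖∑ j, z j * conj (w j)‖ ≤ √(∑ j, ‖z j‖ ^ 2) * √(∑ j, ‖w j‖ ^ 2) :=
  calc ‖∑ j, z j * conj (w j)‖ ≤ ∑ j, ‖z j‖ * ‖w j‖ :=
        (norm_sum_le _ _).trans_eq (by simp only [norm_mul, Complex.norm_conj])
    _ ≤ _ := Real.sum_mul_le_sqrt_mul_sqrt _ _ _

theorem im_sum_mul_conj_comm {ι : Type*} [Fintype ι] (z w : ι → ℂ) :
    (∑ j, w j * conj (z j)).im = -(∑ j, z j * conj (w j)).im := by
  rw [← Complex.conj_im, map_sum]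
  simp only [map_mul, Complex.conj_conj, mul_comm]

def gaugeComplex (k : ℕ) (v : Hk k) : ℂ := ((∑ j, ‖v.1 j‖ ^ 2 : ℝ) : ℂ) + v.2 * Complex.I

theorem re_gaugeComplex (v : Hk k) : (gaugeComplex k v).re = ∑ j, ‖v.1 j‖ ^ 2 := by
  simp [gaugeComplex, -Complex.ofReal_sum]

theorem im_gaugeComplex (v : Hk k) : (gaugeComplex k v).im = v.2 := by
  simp [gaugeComplex, -Complex.ofReal_sum]

theorem rhoK_eq_sqrt_norm_gaugeComplex (v : Hk k) : rhoK k v = √‖gaugeComplex k v‖ := by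
  rw [rhoK, gaugeComplex, Complex.norm_def, Complex.normSq_add_mul_I, Real.sqrt_eq_rpow,
    Real.sqrt_eq_rpow, ← Real.rpow_mul (by positivity)]
  norm_num

theorem gaugeComplex_hmul (p q : Hk k) :
    gaugeComplex k (hmul k p q) =
      gaugeComplex k p + gaugeComplex k q + 2 * ∑ j, p.1 j * conj (q.1 j) := by
  have hre : ∑ j, Complex.normSq (p.1 j + q.1 j) = ∑ j, Complex.normSq (p.1 j) +
      ∑ j, Complex.normSq (q.1 j) + 2 * (∑ j, p.1 j * conj (q.1 j)).re := by
    rw [Complex.re_sum, Finset.mul_sum, ← Finset.sum_add_distrib, ← Finset.sum_add_distrib]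
    exact Finset.sum_congr rfl fun j _ => Complex.normSq_add _ _
  apply Complex.ext
  · simpa [gaugeComplex, hmul, Complex.sq_norm] using hre
  · simp only [Complex.add_im, im_gaugeComplex, hmul, Complex.re_ofNat, Complex.im_ofNat,
      Complex.mul_im, zero_mul, add_zero]

theorem rhoK_nonneg (v : Hk k) : 0 ≤ rhoK k v := by
  rw [rhoK_eq_sqrt_norm_gaugeComplex]; exact Real.sqrt_nonneg _

theorem rhoK_eq_zero_iff (v : Hk k) : rhoK k v = 0 ↔ v = 0 := by
  have hz : ∑ j, ‖v.1 j‖ ^ 2 = 0 ↔ v.1 = 0 := by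
    simp [Finset.sum_eq_zero_iff_of_nonneg, funext_iff]
  rw [rhoK, Real.rpow_eq_zero (by positivity) (by norm_num),
    add_eq_zero_iff_of_nonneg (by positivity) (by positivity), pow_eq_zero_iff two_ne_zero,
    pow_eq_zero_iff two_ne_zero, hz, Prod.ext_iff]
  rfl

theorem rhoK_hmul_le (p q : Hk k) : rhoK k (hmul k p q) ≤ rhoK k p + rhoK k q := by
  have norm_eq (v : Hk k) : ‖gaugeComplex k v‖ = rhoK k v ^ 2 := by
    rw [rhoK_eq_sqrt_norm_gaugeComplex, Real.sq_sqrt (norm_nonneg _)]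
  have sqrt_normSq_le (v : Hk k) : √(∑ j, ‖v.1 j‖ ^ 2) ≤ rhoK k v := by
    rw [rhoK_eq_sqrt_norm_gaugeComplex, ← re_gaugeComplex]
    exact Real.sqrt_le_sqrt (Complex.re_le_norm _)
  have cross : ‖∑ j, p.1 j * conj (q.1 j)‖ ≤ rhoK k p * rhoK k q :=
    (norm_sum_mul_conj_le _ _).trans <|
      mul_le_mul (sqrt_normSq_le p) (sqrt_normSq_le q) (Real.sqrt_nonneg _) (rhoK_nonneg p)
  rw [rhoK_eq_sqrt_norm_gaugeComplex,
    Real.sqrt_le_left (add_nonneg (rhoK_nonneg p) (rhoK_nonneg q))]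
  calc ‖gaugeComplex k (hmul k p q)‖
      ≤ ‖gaugeComplex k p‖ + ‖gaugeComplex k q‖ + ‖(2 : ℂ)‖ * ‖∑ j, p.1 j * conj (q.1 j)‖ := by
        rw [gaugeComplex_hmul, ← norm_mul]; exact norm_add₃_le
    _ ≤ rhoK k p ^ 2 + rhoK k q ^ 2 + 2 * (rhoK k p * rhoK k q) := by
        rw [norm_eq, norm_eq, Complex.norm_two]; gcongr
    _ = (rhoK k p + rhoK k q) ^ 2 := by ring

theorem rhoK_hinv (v : Hk k) : rhoK k (hinv k v) = rhoK k v := by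
  simp [rhoK, hinv]

theorem rhoK_dilK {r : ℝ} (hr : 0 ≤ r) (v : Hk k) : rhoK k (dilK k r v) = r * rhoK k v := by
  have hS : ∑ j, ‖(r • v.1) j‖ ^ 2 = r ^ 2 * ∑ j, ‖v.1 j‖ ^ 2 := by
    simp [Finset.mul_sum, mul_pow]
  rw [rhoK, rhoK, dilK, hS, show (r ^ 2 * ∑ j, ‖v.1 j‖ ^ 2) ^ 2 + (r ^ 2 * v.2) ^ 2 =
      r ^ 4 * ((∑ j, ‖v.1 j‖ ^ 2) ^ 2 + v.2 ^ 2) by ring,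
    Real.mul_rpow (by positivity) (by positivity), ← Real.rpow_natCast r 4, ← Real.rpow_mul hr]
  norm_num

theorem hmul_assoc (a b c : Hk k) : hmul k (hmul k a b) c = hmul k a (hmul k b c) := by
  simp only [hmul, Pi.add_apply, add_mul, mul_add, map_add, Finset.sum_add_distrib, Complex.add_im]
  ext
  · exact add_assoc _ _ _
  · ring

theorem zero_hmul (q : Hk k) : hmul k 0 q = q := by
  simp [hmul]

theorem hmul_zero (q : Hk k) : hmul k q 0 = q := by
  simp [hmul]

theorem hinv_hmul_cancel (g : Hk k) : hmul k (hinv k g) g = 0 := by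
  simp [hmul, hinv, Complex.mul_conj]

theorem hmul_hinv_cancel (g : Hk k) : hmul k g (hinv k g) = 0 := by
  simp [hmul, hinv, Complex.mul_conj]

theorem hinv_hmul_cancel_left (g q : Hk k) : hmul k (hinv k g) (hmul k g q) = q := by
  rw [← hmul_assoc, hinv_hmul_cancel, zero_hmul]

theorem hmul_hinv_cancel_left (g q : Hk k) : hmul k g (hmul k (hinv k g) q) = q := by
  rw [← hmul_assoc, hmul_hinv_cancel, zero_hmul]

theorem hinv_hinv (g : Hk k) : hinv k (hinv k g) = g := by
  simp [hinv]

theorem hinv_hmul_rev (a b : Hk k) : hinv k (hmul k a b) = hmul k (hinv k b) (hinv k a) := by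
  simp only [hinv, hmul, Pi.neg_apply, neg_add_rev, neg_mul, mul_neg, map_neg, neg_neg,
    im_sum_mul_conj_comm b.1 a.1]
  ext
  · simp
  · simp
    ring

theorem dilK_hmul (r : ℝ) (p q : Hk k) :
    hmul k (dilK k r p) (dilK k r q) = dilK k r (hmul k p q) := by
  have scale (j : Fin k) : (r : ℂ) * p.1 j * conj ((r : ℂ) * q.1 j) =
      ((r ^ 2 : ℝ) : ℂ) * (p.1 j * conj (q.1 j)) := by
    rw [map_mul, Complex.conj_ofReal]; push_cast; ring
  simp only [hmul, dilK, Pi.smul_apply, Complex.real_smul, scale, ← Finset.mul_sum,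
    Complex.im_ofReal_mul, smul_add]
  ext
  · rfl
  · ring

theorem dilK_hinv (r : ℝ) (v : Hk k) : hinv k (dilK k r v) = dilK k r (hinv k v) := by
  simp [hinv, dilK]

theorem dK_nonneg (p q : Hk k) : 0 ≤ dK k p q :=
  rhoK_nonneg _

theorem dK_eq_zero_iff (p q : Hk k) : dK k p q = 0 ↔ p = q := by
  rw [dK, rhoK_eq_zero_iff]
  constructor
  · intro h
    rw [← hmul_zero p, ← h, hmul_hinv_cancel_left]
  · rintro rfl
    exact hinv_hmul_cancel p

theorem dK_comm (p q : Hk k) : dK k p q = dK k q p := by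
  rw [dK, dK, ← rhoK_hinv, hinv_hmul_rev, hinv_hinv]

theorem dK_le_add (p q w : Hk k) : dK k p q ≤ dK k p w + dK k w q := by
  have split : hmul k (hinv k p) q = hmul k (hmul k (hinv k p) w) (hmul k (hinv k w) q) := by
    rw [hmul_assoc, hmul_hinv_cancel_left]
  rw [dK, split]
  exact rhoK_hmul_le _ _

theorem dK_hmul_hmul (g p q : Hk k) : dK k (hmul k g p) (hmul k g q) = dK k p q := by
  rw [dK, dK, hinv_hmul_rev, hmul_assoc, hinv_hmul_cancel_left]

theorem dK_dilK {r : ℝ} (hr : 0 ≤ r) (p q : Hk k) :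
    dK k (dilK k r p) (dilK k r q) = r * dK k p q := by
  rw [dK, dK, dilK_hinv, dilK_hmul, rhoK_dilK hr]

end Heisenberg

theorem stmt13_general (k : ℕ) :
    (∀ p q : Hk k, 0 ≤ dK k p q) ∧
    (∀ p q : Hk k, dK k p q = 0 ↔ p = q) ∧
    (∀ p q : Hk k, dK k p q = dK k q p) ∧
    (∀ p q w : Hk k, dK k p q ≤ dK k p w + dK k w q) ∧
    (∀ g p q : Hk k, dK k (hmul k g p) (hmul k g q) = dK k p q) ∧
    (∀ r : ℝ, 0 < r → ∀ p q : Hk k, dK k (dilK k r p) (dilK k r q) = r * dK k p q) :=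
  ⟨dK_nonneg, dK_eq_zero_iff, dK_comm, dK_le_add, dK_hmul_hmul, fun _ hr => dK_dilK hr.le⟩

/-- `d(p,q) = ρ(p⁻¹·q)` is a left-invariant, dilation-homogeneous metric
on the Heisenberg group ℍ_k. -/
theorem stmt13 (k : ℕ) (hk : 1 ≤ k) :
    (∀ p q : Hk k, 0 ≤ dK k p q) ∧
    (∀ p q : Hk k, dK k p q = 0 ↔ p = q) ∧
    (∀ p q : Hk k, dK k p q = dK k q p) ∧
    (∀ p q w : Hk k, dK k p q ≤ dK k p w + dK k w q) ∧
    (∀ g p q : Hk k, dK k (hmul k g p) (hmul k g q) = dK k p q) ∧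
    (∀ r : ℝ, 0 < r → ∀ p q : Hk k, dK k (dilK k r p) (dilK k r q) = r * dK k p q) :=
  stmt13_general k

end
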